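/- arXiv:math/0309039 — 5 statements merged into one kernel-verified Lean document; each statement's English description precedes it below -/
import Mathlib

section
/- Let k ≥ 2 be an integer and let d = (d_1, …, d_k) ∈ ℤ^k satisfy d_1 + ⋯ + d_k = 0. If α ∈ ℤ^k satisfies α_i ≥ 0 for all i and Σ_{i=1}^{k} α_i δ_i = d, then Σ_{i=1}^{k} α_i ≥ φ(d). In other words, φ(d) is the minimum 1-norm among all nonnegative integer representations of d in terms of the vectors δ_1, …, δ_k. -/
/-- `delta k i` is the vector `δ_i ∈ ℤ^k` with `(δ_i)_i = 1`, `(δ_i)_{i+1} = -1`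
(indices taken mod k) and all other components `0`. -/
def delta (k : ℕ) (i : Fin k) : Fin k → ℤ :=
  fun j => if j = i then 1 else if (j : ℕ) = ((i : ℕ) + 1) % k then -1 else 0

/-- `gamma d j = Σ_{i ≤ j} d_i`, the partial sums of `d`. -/
def gamma {k : ℕ} (d : Fin k → ℤ) (j : Fin k) : ℤ := ∑ i ∈ Finset.Iic j, d i

/-- `phi d = Σ_j (γ_j - min_m γ_m)`, the shortest rearrangement path length. -/
noncomputable def phi {k : ℕ} (d : Fin k → ℤ) : ℤ :=
  ∑ j : Fin k, (gamma d j - sInf (Set.range (gamma d)))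

/-!
Reading off the `j`-th coordinate of `∑ i, α i • δ_i = d` gives `d j = α j - α (j - 1)`
(cyclically), so the partial sums telescope: `γ_j = α j - α_k`. Hence every `γ_j ≥ -α_k`,
so `min γ ≥ -α_k` and each term `γ_j - min γ` of `φ(d)` is at most `α j`.
-/

theorem delta_eq_single_sub_single {n : ℕ} (i : Fin (n + 2)) :
    delta (n + 2) i = Pi.single i 1 - Pi.single (i + 1) 1 := by
  funext j
  by_cases hji : j = i
  · subst hji
    simp [delta]
  · simp [delta, Pi.single_apply, hji, Fin.ext_iff, Fin.val_add, apply_ite Neg.neg]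

theorem sum_smul_delta_apply {n : ℕ} (α : Fin (n + 2) → ℤ) (j : Fin (n + 2)) :
    (∑ i, α i • delta (n + 2) i) j = α j - α (j - 1) := by
  simp [delta_eq_single_sub_single, Finset.sum_apply, Pi.single_apply, mul_sub,
    Finset.sum_sub_distrib, ← sub_eq_iff_eq_add]

theorem gamma_zero {n : ℕ} (d : Fin (n + 1) → ℤ) : gamma d 0 = d 0 := by
  rw [gamma, ← bot_eq_zero, Finset.Iic_bot, Finset.sum_singleton]

theorem gamma_succ {n : ℕ} (d : Fin (n + 1) → ℤ) (j : Fin n) :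
    gamma d j.succ = gamma d j.castSucc + d j.succ := by
  have hIio : Finset.Iio j.succ = Finset.Iic j.castSucc := by
    ext i
    simp [Fin.lt_def, Fin.le_def]
  rw [gamma, ← Finset.sum_Iio_add_eq_sum_Iic, hIio, gamma]

theorem gamma_eq_sub_last {n : ℕ} {d α : Fin (n + 1) → ℤ} (h : ∀ j, d j = α j - α (j - 1))
    (j : Fin (n + 1)) : gamma d j = α j - α (Fin.last n) := by
  have hlast : (-1 : Fin (n + 1)) = Fin.last n := Fin.ext Fin.coe_neg_one
  induction j using Fin.induction with
  | zero => rw [gamma_zero, h, zero_sub, hlast]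
  | succ j ih =>
    rw [gamma_succ, ih, h, ← Fin.coeSucc_eq_succ, add_sub_cancel_right]
    ring

theorem phi_le_sum_of_gamma_eq_sub {k : ℕ} {d α : Fin k → ℤ} {c : ℤ} (hα : ∀ i, 0 ≤ α i)
    (hγ : ∀ j, gamma d j = α j - c) : phi d ≤ ∑ i, α i := by
  refine Finset.sum_le_sum fun j _ => ?_
  have hc : -c ≤ sInf (Set.range (gamma d)) :=
    le_csInf (Set.range_nonempty_iff_nonempty.mpr ⟨j⟩) <| by
      rintro _ ⟨i, rfl⟩
      linarith [hγ i, hα i]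
  linarith [hγ j]

theorem phi_is_min_path_length_general (k : ℕ) (hk : 2 ≤ k) (d : Fin k → ℤ)
    (α : Fin k → ℤ) (hα : ∀ i, 0 ≤ α i)
    (hrep : ∑ i, α i • delta k i = d) :
    phi d ≤ ∑ i, α i := by
  obtain ⟨n, rfl⟩ : ∃ n, k = n + 2 := ⟨k - 2, by omega⟩
  have hd : ∀ j, d j = α j - α (j - 1) := fun j => by rw [← hrep, sum_smul_delta_apply]
  exact phi_le_sum_of_gamma_eq_sub hα (gamma_eq_sub_last hd)

/-- any nonnegative integer representation `Σ_i α_i δ_i = d` has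
`Σ_i α_i ≥ φ(d)`: `φ(d)` is the minimal 1-norm of such representations. -/
theorem phi_is_min_path_length (k : ℕ) (hk : 2 ≤ k) (d : Fin k → ℤ)
    (hd : ∑ i, d i = 0) (α : Fin k → ℤ) (hα : ∀ i, 0 ≤ α i)
    (hrep : ∑ i, α i • delta k i = d) :
    phi d ≤ ∑ i, α i :=
  phi_is_min_path_length_general k hk d α hα hrep
end

section
/- Let k ≥ 2 and n ≥ k be integers and let q be a real number. For every configuration X (a k-tuple of positive integers summing to n), Σ_Z q^{φ(X − Z)} = Σ_Z q^{φ(Z − X*)}, where both sums range over all configurations Z. That is, the collection of shortest rearrangement path lengths into X equals the collection of shortest rearrangement path lengths out of the co-state X*. -/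
/-- The reversal (co-state) `X* = (x_k, …, x_1)` of `X = (x_1, …, x_k)`. -/
def revVec {k : ℕ} {α : Type*} (X : Fin k → α) : Fin k → α := fun j => X j.rev

/-!
Reindex the right-hand side by `Z ↦ Z*`, which permutes configurations. Since
`Z* - X* = -(X - Z)*`, it suffices that `φ(-d*) = φ(d)` whenever `Σ dᵢ = 0`. For such `d` the
`j`-th prefix sum of `-d*` is minus the sum of the last `j + 1` entries of `d`, i.e. the sum of
its first `k - 1 - j` entries, which is again a prefix sum of `d` (the empty one being the full
one, `0`). So the prefix sums of `-d*` are those of `d` permuted, and `φ` only sees the family of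
prefix sums up to permutation.
-/

open Finset

variable {k : ℕ}

lemma phi_eq_of_gamma_eq_comp {d d' : Fin k → ℤ} (σ : Equiv.Perm (Fin k))
    (h : gamma d' = gamma d ∘ σ) : phi d' = phi d := by
  rw [phi, phi, h, σ.surjective.range_comp]
  exact Equiv.sum_comp σ fun j => gamma d j - sInf (Set.range (gamma d))

lemma gamma_neg_revVec {d : Fin k → ℤ} (hd : ∑ i, d i = 0) (j : Fin k) :
    gamma (-revVec d) j = ∑ i ∈ Iio j.rev, d i := by
  have hrev : ∑ i ∈ Iic j, d i.rev = ∑ i ∈ Ici j.rev, d i := by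
    rw [← Fin.map_revPerm_Iic, sum_map]; rfl
  have hsplit : ∑ i ∈ Iio j.rev, d i + ∑ i ∈ Ici j.rev, d i = 0 := by
    rw [← hd, ← sum_union <|
      disjoint_left.2 fun i hi hi' => (mem_Iio.1 hi).not_ge (mem_Ici.1 hi')]
    congr 1; ext i; simp [lt_or_ge]
  simp only [gamma, Pi.neg_apply, revVec, sum_neg_distrib, hrev]
  linarith

lemma sum_Iio_eq_gamma_finRotate_symm {d : Fin k → ℤ} (hd : ∑ i, d i = 0)
    (r : Fin k) : ∑ i ∈ Iio r, d i = gamma d ((finRotate k).symm r) := by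
  obtain ⟨m, rfl⟩ : ∃ m, k = m + 1 := Nat.exists_eq_succ_of_ne_zero r.pos.ne'
  rw [finRotate_symm_apply, gamma]
  obtain rfl | hr := eq_or_ne r 0
  · rw [(Iio_eq_empty (a := (0 : Fin (m + 1)))).2 (isMin_iff_eq_bot.2 rfl), sum_empty, ← hd]
    congr 1
    ext i
    simp only [mem_univ, mem_Iic, true_iff, Fin.le_def, Fin.coe_sub_one, if_pos]
    omega
  · rw [Fin.Iic_sub_one_eq_Iio (Fin.pos_iff_ne_zero.2 hr)]

lemma phi_neg_revVec {d : Fin k → ℤ} (hd : ∑ i, d i = 0) : phi (-revVec d) = phi d :=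
  phi_eq_of_gamma_eq_comp (Fin.revPerm.trans (finRotate k).symm) <| funext fun j => by
    simp [gamma_neg_revVec hd, sum_Iio_eq_gamma_finRotate_symm hd]

lemma revVec_revVec {α : Type*} (X : Fin k → α) : revVec (revVec X) = X :=
  funext fun i => congrArg X i.rev_rev

lemma sum_revVec {M : Type*} [AddCommMonoid M] (X : Fin k → M) :
    ∑ i, revVec X i = ∑ i, X i :=
  Equiv.sum_comp Fin.revPerm X

lemma revVec_sub {G : Type*} [AddGroup G] (X Y : Fin k → G) :
    revVec X - revVec Y = revVec (X - Y) := rfl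

lemma bijOn_revVec_configurations (n : ℤ) :
    Set.BijOn (revVec : (Fin k → ℤ) → Fin k → ℤ) {Z | (∀ i, 0 < Z i) ∧ ∑ i, Z i = n}
      {Z | (∀ i, 0 < Z i) ∧ ∑ i, Z i = n} := by
  refine Set.InvOn.bijOn ⟨fun Z _ => revVec_revVec Z, fun Z _ => revVec_revVec Z⟩ ?_ ?_ <;>
    exact fun Z ⟨hpos, hsum⟩ => ⟨fun i => hpos i.rev, by rw [sum_revVec, hsum]⟩

theorem paths_into_eq_paths_out_of_costate_general (k n : ℕ)
    (q : ℝ) (X : Fin k → ℤ) (hX : (∀ i, 0 < X i) ∧ ∑ i, X i = (n : ℤ)) :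
    ∑ᶠ Z ∈ {Z : Fin k → ℤ | (∀ i, 0 < Z i) ∧ ∑ i, Z i = (n : ℤ)}, q ^ phi (X - Z)
      = ∑ᶠ Z ∈ {Z : Fin k → ℤ | (∀ i, 0 < Z i) ∧ ∑ i, Z i = (n : ℤ)},
          q ^ phi (Z - revVec X) := by
  refine finsum_mem_eq_of_bijOn revVec (bijOn_revVec_configurations n) fun Z ⟨_, hZ⟩ => ?_
  have hd : ∑ i, (X - Z) i = 0 := by simp [sum_sub_distrib, hX.2, hZ]
  rw [← neg_sub (revVec X), revVec_sub, phi_neg_revVec hd]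

/-- for every configuration `X`, the sum over all configurations
`Z` of `q^{φ(X - Z)}` (path lengths into `X`) equals the sum over all
configurations `Z` of `q^{φ(Z - X*)}` (path lengths out of the co-state `X*`). -/
theorem paths_into_eq_paths_out_of_costate (k n : ℕ) (hk : 2 ≤ k) (hn : k ≤ n)
    (q : ℝ) (X : Fin k → ℤ) (hX : (∀ i, 0 < X i) ∧ ∑ i, X i = (n : ℤ)) :
    ∑ᶠ Z ∈ {Z : Fin k → ℤ | (∀ i, 0 < Z i) ∧ ∑ i, Z i = (n : ℤ)}, q ^ phi (X - Z)
      = ∑ᶠ Z ∈ {Z : Fin k → ℤ | (∀ i, 0 < Z i) ∧ ∑ i, Z i = (n : ℤ)},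
          q ^ phi (Z - revVec X) :=
  paths_into_eq_paths_out_of_costate_general k n q X hX
end

section
/- Let k and n be integers with 1 ≤ k ≤ n and let r be a real number. Then Σ_{(X,B)} r^{|B|} = Σ_{b=0}^{k−1} C(k, b) · C(n−b−1, k−b−1) · r^b, where the left-hand sum ranges over all states (X, B), i.e., over all pairs where X = (x_1, …, x_k) is a k-tuple of positive integers with x_1 + ⋯ + x_k = n and B is a proper subset of {1, …, k} with x_i = 1 for every i ∈ B, and C(·,·) denotes the binomial coefficient. -/
/-!
Sum first over the blocked set `B`. Subtracting `1` from every entry turns the tuples compatible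
with a fixed `B` of size `b < k` into the weak compositions of `n - k` into the `k - b` unblocked
parts, so by stars and bars there are `C(n - b - 1, k - b - 1)` of them. This depends on `B` only
through `b`, and there are `C(k, b)` sets `B` of size `b`.
-/

/-- The set of states of the circular-warehouse model: pairs `(X, B)` where `X`
is a k-tuple of positive integers summing to `n` and `B` is a proper subset of
the workers with `X i = 1` for every blocked worker `i ∈ B`. -/
def States (k n : ℕ) : Set ((Fin k → ℕ) × Finset (Fin k)) :=
  {p | (∀ i, 0 < p.1 i) ∧ (∑ i, p.1 i = n) ∧ p.2 ≠ Finset.univ ∧ ∀ i ∈ p.2, p.1 i = 1}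

open Finset

namespace Finset

theorem card_sym {α : Type*} [DecidableEq α] (s : Finset α) (n : ℕ) :
    #(s.sym n) = (#s).multichoose n := by
  conv_lhs => rw [← s.attach_map_val, sym_map, card_map, ← univ_eq_attach, sym_univ]
  rw [card_univ, Sym.card_sym_eq_multichoose, Fintype.card_coe]

theorem card_piAntidiag_nat {ι : Type*} [DecidableEq ι] (s : Finset ι) (n : ℕ) :
    #(piAntidiag s n) = (#s).multichoose n := by
  rw [← map_sym_eq_piAntidiag, card_map, card_sym]

theorem sum_erase_univ_apply_card {α M : Type*} [Fintype α] [DecidableEq α]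
    [AddCancelCommMonoid M] (f : ℕ → M) :
    ∑ B ∈ univ.erase (univ : Finset α), f #B
      = ∑ b ∈ range (Fintype.card α), (Fintype.card α).choose b • f b := by
  have h := sum_powerset_apply_card f (x := (univ : Finset α))
  rw [powerset_univ, ← add_sum_erase _ _ (mem_univ univ), card_univ, sum_range_succ,
    Nat.choose_self, one_smul, add_comm] at h
  exact add_right_cancel h

end Finset

section CompositionsOneOn

variable {ι : Type*} [Fintype ι] [DecidableEq ι]

def compositionsOneOn (B : Finset ι) (n : ℕ) : Finset (ι → ℕ) :=
  {x ∈ piAntidiag univ n | (∀ i, 0 < x i) ∧ ∀ i ∈ B, x i = 1}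

theorem compositionsOneOn_add_card_eq_map (B : Finset ι) (m : ℕ) :
    compositionsOneOn B (m + Fintype.card ι) = (piAntidiag Bᶜ m).map (addRightEmbedding 1) := by
  ext x
  simp only [compositionsOneOn, mem_filter, mem_piAntidiag, mem_univ, mem_map,
    addRightEmbedding_apply]
  constructor
  · rintro ⟨⟨hsum, -⟩, hpos, hone⟩
    have hsupp : ∀ i, (x - 1) i ≠ 0 → i ∈ Bᶜ := fun i hi =>
      mem_compl.2 fun hiB => hi (by simp [hone i hiB])
    refine ⟨x - 1, ⟨?_, hsupp⟩, funext fun i => Nat.sub_add_cancel (hpos i)⟩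
    have hcompl : Bᶜ.sum (x - 1) = univ.sum (x - 1) :=
      sum_subset (subset_univ _) fun i _ hi => by_contra (hi ∘ hsupp i)
    have hsplit : univ.sum (x - 1) + Fintype.card ι = univ.sum x := by
      rw [← card_univ, card_eq_sum_ones, ← sum_add_distrib]
      exact sum_congr rfl fun i _ => Nat.sub_add_cancel (hpos i)
    omega
  · rintro ⟨y, ⟨hsum, hsupp⟩, rfl⟩
    have hcompl : ∑ i ∈ Bᶜ, y i = ∑ i, y i :=
      sum_subset (subset_univ _) fun i _ hi => by_contra (hi ∘ hsupp i)
    refine ⟨⟨?_, fun _ _ => trivial⟩, fun i => by simp, fun i hi => ?_⟩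
    · simp only [Pi.add_apply, Pi.one_apply, sum_add_distrib, ← hcompl, hsum, sum_const,
        card_univ, smul_eq_mul, mul_one]
    · have : y i = 0 := by_contra fun h => mem_compl.1 (hsupp i h) hi
      simp [this]

theorem card_compositionsOneOn (B : Finset ι) {n : ℕ} (hn : Fintype.card ι ≤ n) :
    #(compositionsOneOn B n) = (#Bᶜ).multichoose (n - Fintype.card ι) := by
  obtain ⟨m, rfl⟩ := Nat.exists_eq_add_of_le' hn
  rw [compositionsOneOn_add_card_eq_map, card_map, card_piAntidiag_nat, Nat.add_sub_cancel]

theorem card_compositionsOneOn_eq_choose (B : Finset ι) {n : ℕ} (hB : #B < Fintype.card ι)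
    (hn : Fintype.card ι ≤ n) :
    #(compositionsOneOn B n) = (n - #B - 1).choose (Fintype.card ι - #B - 1) := by
  rw [card_compositionsOneOn B hn, card_compl, Nat.multichoose_eq,
    show Fintype.card ι - #B + (n - Fintype.card ι) - 1 = n - #B - 1 by omega]
  exact Nat.choose_symm_of_eq_add (by omega)

end CompositionsOneOn

theorem mem_states_iff {k n : ℕ} {p : (Fin k → ℕ) × Finset (Fin k)} :
    p ∈ States k n ↔ p.2 ∈ univ.erase univ ∧ p.1 ∈ compositionsOneOn p.2 n := by
  simp only [States, Set.mem_ofPred_eq, compositionsOneOn, mem_erase, mem_univ, and_true,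
    mem_filter, mem_piAntidiag, ne_eq, implies_true]
  tauto

theorem warehouse_total_weight_general (k n : ℕ) (hkn : k ≤ n) (r : ℝ) :
    ∑ᶠ p ∈ States k n, r ^ p.2.card
      = ∑ b ∈ Finset.range k,
          (Nat.choose k b : ℝ) * (Nat.choose (n - b - 1) (k - b - 1) : ℝ) * r ^ b := by
  set S := (univ.erase univ).biUnion fun B : Finset (Fin k) => compositionsOneOn B n ×ˢ {B}
  have hS (p) : p ∈ S ↔ p.2 ∈ univ.erase univ ∧ p.1 ∈ compositionsOneOn p.2 n := by
    simp only [S, mem_biUnion, mem_product, mem_singleton]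
    grind
  have hStates : States k n = S := by ext p; simp [mem_states_iff, hS]
  rw [hStates, finsum_mem_coe_finset, sum_finset_product_right S _ (compositionsOneOn · n) hS]
  calc ∑ B ∈ univ.erase univ, ∑ _x ∈ compositionsOneOn B n, r ^ #B
      = ∑ B ∈ univ.erase (univ : Finset (Fin k)),
          ((n - #B - 1).choose (k - #B - 1) : ℝ) * r ^ #B := by
        refine sum_congr rfl fun B hB => ?_
        have hBk : #B < Fintype.card (Fin k) := (card_lt_iff_ne_univ B).2 (ne_of_mem_erase hB)
        rw [sum_const, card_compositionsOneOn_eq_choose B hBk (by simpa), nsmul_eq_mul,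
          Fintype.card_fin]
    _ = _ := by
        rw [sum_erase_univ_apply_card (fun b => ((n - b - 1).choose (k - b - 1) : ℝ) * r ^ b),
          Fintype.card_fin]
        simp only [nsmul_eq_mul, mul_assoc]

/-- the total weight of all states, each state `(X,B)` weighted by
`r^{|B|}`, equals `Σ_{b=0}^{k-1} C(k,b) * C(n-b-1, k-b-1) * r^b`. -/
theorem warehouse_total_weight (k n : ℕ) (hk : 1 ≤ k) (hkn : k ≤ n) (r : ℝ) :
    ∑ᶠ p ∈ States k n, r ^ p.2.card
      = ∑ b ∈ Finset.range k,
          (Nat.choose k b : ℝ) * (Nat.choose (n - b - 1) (k - b - 1) : ℝ) * r ^ b :=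
  warehouse_total_weight_general k n hkn r
end

section
/- Let k ≥ 2 and n ≥ k be integers, let s, q be reals with 0 < s < 1 and q = 1 − s, and set r = q/s. For states i = (X, B) and j = (Y, C), define the transition probability p_{ij} = r^{|C|} · (s^k / (1 − q^k)) · q^{φ(Y − X)}, and define the weight ω_i = r^{|B|}. Then for every state j, Σ_i ω_i · p_{ij} = ω_j, where the sum ranges over all states i. Consequently the normalized distribution ν = ω / (Σ_i ω_i) is a stationary distribution of the Markov chain with transition matrix (p_{ij}). -/
/-!
Write `q = 1 - s`. Summing out the blocked sets, the balance equation at `(Y, C)` becomes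
`∑_X q ^ φ(Y - X) * s ^ (-#{i | X i = 1}) = (1 - q ^ k) / s ^ k` over the configurations `X`;
for `n = k` only `X = Y = 1` is left and this is `(1 + r) ^ k - r ^ k = (1 - q ^ k) / s ^ k`.

For `n > k` the identity is read off `s ^ (-k) = ∑_{t ∈ ℕ^k} q ^ (∑ t)`. Call `g ∈ ℕ^k` a flow
if `X = Y + g (· - 1) - g` is positive. The flows with a given `X` are the translates `g_X + m`
of a minimal one, with `∑ (g_X + m) = φ(Y - X) + k m`, and `g` cannot be raised exactly at the
positions where `X j = 1`. Every `t` is, uniquely because `n > k`, the largest flow below it plus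
arbitrary slack at those positions, so
`∑_t q ^ (∑ t) = ∑_X q ^ φ(Y - X) * s ^ (-#{i | X i = 1}) / (1 - q ^ k)`.
-/

open Finset
open scoped ENNReal

namespace Warehouse

-- Positions are cyclic: `j - 1` is computed in the ring `Fin k`, so `0 - 1` is the last one.
open Fin.NatCast Fin.CommRing

section PartialSums

variable {k : ℕ}

lemma sInf_range_gamma_le (d : Fin k → ℤ) (j : Fin k) :
    sInf (Set.range (gamma d)) ≤ gamma d j :=
  csInf_le (Set.finite_range _).bddBelow ⟨j, rfl⟩

lemma phi_nonneg (d : Fin k → ℤ) : 0 ≤ phi d :=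
  sum_nonneg fun j _ => sub_nonneg.mpr (sInf_range_gamma_le d j)

variable [NeZero k]

lemma sum_comp_sub_one {M : Type*} [AddCommMonoid M] (f : Fin k → M) :
    ∑ j, f (j - 1) = ∑ j, f j :=
  Fintype.sum_equiv (Equiv.subRight 1) _ _ fun _ => rfl

lemma forall_of_imp_sub_one {P : Fin k → Prop} (hP : ∀ j, P j → P (j - 1)) {j₀ : Fin k}
    (h₀ : P j₀) (j : Fin k) : P j := by
  have key : ∀ m : ℕ, P (j₀ - m) := by
    intro m
    induction m with
    | zero => simpa using h₀
    | succ m ih => simpa [sub_sub] using hP _ ih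
  simpa using key (j₀ - j).val

lemma gamma_eq_sum_range (d : Fin k → ℤ) (j : Fin k) :
    gamma d j = ∑ i ∈ range (j + 1), d i := by
  refine sum_nbij' (fun i => i.val) (fun i => i) (fun i hi => ?_) (fun i hi => ?_)
    (fun i _ => Fin.cast_val_eq_self i) (fun i hi => ?_) (fun i _ => by simp)
  · simpa [Nat.lt_succ_iff] using hi
  · rw [mem_range] at hi
    simp [Fin.le_def, Fin.val_cast_of_lt (hi.trans_le j.isLt), Nat.lt_succ_iff.mp hi]
  · rw [mem_range] at hi
    exact Fin.val_cast_of_lt (hi.trans_le j.isLt)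

lemma gamma_sub_one_zero (d : Fin k → ℤ) : gamma d (0 - 1) = ∑ i, d i := by
  obtain ⟨m, rfl⟩ := Nat.exists_eq_succ_of_ne_zero (NeZero.ne k)
  rw [gamma_eq_sum_range, zero_sub, Fin.coe_neg_one, ← Fin.sum_univ_eq_sum_range]
  simp

lemma gamma_eq_gamma_sub_one_add {d : Fin k → ℤ} (hd : ∑ i, d i = 0) (j : Fin k) :
    gamma d j = gamma d (j - 1) + d j := by
  rcases eq_or_ne j 0 with rfl | hj
  · rw [gamma_sub_one_zero, hd, gamma_eq_sum_range]
    simp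
  · obtain ⟨m, rfl⟩ := Nat.exists_eq_succ_of_ne_zero (NeZero.ne k)
    obtain ⟨i, hi⟩ : ∃ i : ℕ, j.val = i + 1 :=
      Nat.exists_eq_succ_of_ne_zero (Fin.val_ne_zero_iff.mpr hj)
    have hj1 : (j - 1).val = i := by rw [Fin.coe_sub_one, if_neg hj, hi]; rfl
    rw [gamma_eq_sum_range, gamma_eq_sum_range, hj1, hi, sum_range_succ _ (i + 1)]
    congr
    rw [← hi, Fin.cast_val_eq_self]

lemma gamma_eq_sub_of_eq_sub {d g : Fin k → ℤ} (hd : ∀ i, d i = g i - g (i - 1)) (j : Fin k) :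
    gamma d j = g j - g (0 - 1) := by
  have hsum : ∑ i, d i = 0 := by simp [hd, sum_sub_distrib, sum_comp_sub_one g]
  have hconst := forall_of_imp_sub_one (P := fun i => gamma d i - g i = gamma d j - g j)
    (fun i hi => by rw [gamma_eq_gamma_sub_one_add hsum i, hd] at hi; linarith) rfl (0 - 1)
  rw [gamma_sub_one_zero, hsum] at hconst
  linarith

end PartialSums

section Configurations

variable {k n : ℕ}

def configs (k n : ℕ) : Finset (Fin k → ℕ) :=
  (Fintype.piFinset fun _ => range (n + 1)).filter fun X => (∀ i, 0 < X i) ∧ ∑ i, X i = n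

lemma mem_configs {X : Fin k → ℕ} : X ∈ configs k n ↔ (∀ i, 0 < X i) ∧ ∑ i, X i = n := by
  refine mem_filter.trans (and_iff_right_of_imp fun h => Fintype.mem_piFinset.mpr fun i => ?_)
  rw [mem_range_succ_iff, ← h.2]
  exact single_le_sum (fun i _ => Nat.zero_le _) (mem_univ i)

lemma le_of_mem_configs {X : Fin k → ℕ} (hX : X ∈ configs k n) : k ≤ n := by
  obtain ⟨hpos, rfl⟩ := mem_configs.mp hX
  simpa using card_nsmul_le_sum univ X 1 fun i _ => hpos i

lemma configs_self : configs k k = {fun _ => 1} := by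
  ext X
  rw [mem_configs, mem_singleton]
  constructor
  · rintro ⟨hpos, hsum⟩
    have hsum' : ∑ _i : Fin k, 1 = ∑ i, X i := by simp [hsum]
    have := (sum_eq_sum_iff_of_le fun i (_ : i ∈ univ) => hpos i).mp hsum'
    exact funext fun i => (this i (mem_univ i)).symm
  · rintro rfl
    simp

def ones (X : Fin k → ℕ) : Finset (Fin k) := univ.filter (X · = 1)

noncomputable def pathLength (X Y : Fin k → ℕ) : ℕ := (phi fun m => (Y m : ℤ) - X m).toNat

lemma natCast_pathLength (X Y : Fin k → ℕ) :
    (pathLength X Y : ℤ) = phi fun m => (Y m : ℤ) - X m :=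
  Int.toNat_of_nonneg (phi_nonneg _)

end Configurations

section Flows

variable {k : ℕ} [NeZero k] {Y f g t : Fin k → ℕ}

/-- `g j` units cross from position `j + 1` to position `j` on the way from `flowConfig Y g`
to `Y`; `g` is a flow when that configuration stays positive. -/
def IsFlow (Y g : Fin k → ℕ) : Prop := ∀ j, g j + 1 ≤ g (j - 1) + Y j

def flowConfig (Y g : Fin k → ℕ) (j : Fin k) : ℕ := Y j + g (j - 1) - g j

def saturated (Y g : Fin k → ℕ) : Finset (Fin k) :=
  univ.filter fun j => g j + 1 = g (j - 1) + Y j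

def flowMin (g : Fin k → ℕ) : ℕ := univ.inf' univ_nonempty g

lemma sInf_range_natCast_sub (g : Fin k → ℕ) (c : ℤ) :
    sInf (Set.range fun j => (g j : ℤ) - c) = flowMin g - c := by
  rw [flowMin, apply_inf'_eq_inf'_comp univ_nonempty (fun x : ℕ => (x : ℤ) - c)
    fun x y => by simp [min_sub_sub_right], inf'_univ_eq_ciInf]
  rfl

namespace IsFlow

variable (hg : IsFlow Y g)
include hg

lemma natCast_flowConfig (j : Fin k) : (flowConfig Y g j : ℤ) = Y j + g (j - 1) - g j := by
  have := hg j
  simp only [flowConfig]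
  omega

lemma flowConfig_mem_configs : flowConfig Y g ∈ configs k (∑ i, Y i) := by
  refine mem_configs.mpr ⟨fun j => by have := hg j; simp only [flowConfig]; omega, ?_⟩
  have : ∑ j, (flowConfig Y g j : ℤ) = ∑ j, (Y j : ℤ) := by
    simp [hg.natCast_flowConfig, sum_add_distrib, sum_sub_distrib,
      sum_comp_sub_one fun j => (g j : ℤ)]
  exact_mod_cast this

lemma saturated_eq : saturated Y g = ones (flowConfig Y g) := by
  ext j
  have := hg j
  simp only [saturated, ones, mem_filter, mem_univ, true_and]
  simp only [flowConfig]
  omega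

lemma gamma_sub_flowConfig :
    gamma (fun m => (Y m : ℤ) - flowConfig Y g m) = fun j => (g j : ℤ) - g (0 - 1) :=
  funext <| gamma_eq_sub_of_eq_sub fun i => by rw [hg.natCast_flowConfig]; ring

lemma pathLength_flowConfig_add :
    pathLength (flowConfig Y g) Y + k * flowMin g = ∑ j, g j := by
  zify
  rw [natCast_pathLength, phi, hg.gamma_sub_flowConfig, sInf_range_natCast_sub]
  simp [sum_sub_distrib]

end IsFlow

noncomputable def flowOf (Y X : Fin k → ℕ) (m : ℕ) (j : Fin k) : ℕ :=
  (gamma (fun i => (Y i : ℤ) - X i) j - sInf (Set.range (gamma fun i => (Y i : ℤ) - X i))).toNat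
    + m

omit [NeZero k] in
lemma natCast_flowOf (X : Fin k → ℕ) (m : ℕ) (j : Fin k) :
    (flowOf Y X m j : ℤ) = gamma (fun i => (Y i : ℤ) - X i) j
      - sInf (Set.range (gamma fun i => (Y i : ℤ) - X i)) + m := by
  have := sInf_range_gamma_le (fun i => (Y i : ℤ) - X i) j
  simp only [flowOf]
  omega

lemma flowMin_flowOf (X : Fin k → ℕ) (m : ℕ) : flowMin (flowOf Y X m) = m := by
  obtain ⟨j₀, hj₀⟩ := (Set.range_nonempty _).csInf_mem
    (Set.finite_range (gamma fun i => (Y i : ℤ) - X i))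
  refine le_antisymm ((inf'_le _ (mem_univ j₀)).trans_eq ?_) (le_inf' _ _ fun j _ => ?_)
  · simp [flowOf, hj₀]
  · simp [flowOf]

section OfConfig

variable {X : Fin k → ℕ} (hX : X ∈ configs k (∑ i, Y i)) (m : ℕ)
include hX

lemma gamma_sub_eq_gamma_sub_one_add (j : Fin k) :
    gamma (fun i => (Y i : ℤ) - X i) j
      = gamma (fun i => (Y i : ℤ) - X i) (j - 1) + (Y j - X j) := by
  refine gamma_eq_gamma_sub_one_add ?_ j
  rw [sum_sub_distrib, ← Nat.cast_sum, ← Nat.cast_sum, (mem_configs.mp hX).2, sub_self]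

lemma isFlow_flowOf : IsFlow Y (flowOf Y X m) := fun j => by
  have := (mem_configs.mp hX).1 j
  have := gamma_sub_eq_gamma_sub_one_add hX j
  have := natCast_flowOf (Y := Y) X m j
  have := natCast_flowOf (Y := Y) X m (j - 1)
  omega

lemma flowConfig_flowOf : flowConfig Y (flowOf Y X m) = X := funext fun j => by
  have := (isFlow_flowOf hX m).natCast_flowConfig j
  have := gamma_sub_eq_gamma_sub_one_add hX j
  have := natCast_flowOf (Y := Y) X m j
  have := natCast_flowOf (Y := Y) X m (j - 1)
  omega

end OfConfig

lemma IsFlow.flowOf_flowConfig (hg : IsFlow Y g) :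
    flowOf Y (flowConfig Y g) (flowMin g) = g := by
  funext j
  zify
  rw [natCast_flowOf, hg.gamma_sub_flowConfig, sInf_range_natCast_sub]
  ring

noncomputable def flowEquiv (Y : Fin k → ℕ) :
    {g // IsFlow Y g} ≃ configs k (∑ i, Y i) × ℕ where
  toFun g := (⟨flowConfig Y g.1, g.2.flowConfig_mem_configs⟩, flowMin g.1)
  invFun p := ⟨flowOf Y p.1 p.2, isFlow_flowOf p.1.2 p.2⟩
  left_inv g := Subtype.ext g.2.flowOf_flowConfig
  right_inv p := Prod.ext (Subtype.ext (flowConfig_flowOf p.1.2 p.2)) (flowMin_flowOf _ _)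

def IsSaturatedBelow (Y g t : Fin k → ℕ) : Prop := g ≤ t ∧ ∀ j, g j < t j → j ∈ saturated Y g

/-- The positions where `f` exceeds `g` form a set closed under `j ↦ j - 1`, hence everything;
then every edge of `g` is saturated, which forces `∑ Y = k`. -/
lemma IsFlow.le_of_isSaturatedBelow (hkn : k < ∑ i, Y i) (hf : IsFlow Y f) (hft : f ≤ t)
    (hgt : IsSaturatedBelow Y g t) : f ≤ g := by
  intro j₀
  by_contra hj₀
  have hsat : ∀ j, g j < f j → g j + 1 = g (j - 1) + Y j := fun j hj => by
    simpa [saturated] using hgt.2 j (hj.trans_le (hft j))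
  have hlt : ∀ j, g j < f j := forall_of_imp_sub_one (P := fun j => g j < f j)
    (fun j hj => by have := hsat j hj; have := hf j; omega) (not_le.mp hj₀)
  have hsum := sum_congr rfl fun j (_ : j ∈ univ) => hsat j (hlt j)
  simp only [sum_add_distrib, sum_comp_sub_one g, sum_const, card_univ, Fintype.card_fin,
    smul_eq_mul, mul_one] at hsum
  omega

lemma IsFlow.update_add_one (hg : IsFlow Y g) {j : Fin k} (hj : j ∉ saturated Y g) :
    IsFlow Y (Function.update g j (g j + 1)) := fun i => by
  have hle : g (i - 1) ≤ Function.update g j (g j + 1) (i - 1) :=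
    le_update_self_iff.mpr (Nat.le_succ _) (i - 1)
  have := hg i
  rcases eq_or_ne i j with rfl | hi
  · simp only [saturated, mem_filter, mem_univ, true_and] at hj
    rw [Function.update_self]
    omega
  · rw [Function.update_of_ne hi]
    omega

/-- A flow maximising `∑ g` among the flows below `t` cannot be raised at an unsaturated
position. -/
lemma exists_isSaturatedBelow (hY : ∀ i, 0 < Y i) (t : Fin k → ℕ) :
    ∃ g, IsFlow Y g ∧ IsSaturatedBelow Y g t := by
  classical
  set S := (Fintype.piFinset fun j => range (t j + 1)).filter (IsFlow Y)
  have mem_S : ∀ {g}, g ∈ S ↔ g ≤ t ∧ IsFlow Y g := fun {g} => by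
    simp [S, Pi.le_def]
  have hzero : IsFlow Y 0 := fun j => by simpa [Nat.one_le_iff_ne_zero] using (hY j).ne'
  obtain ⟨g, hgS, hmax⟩ :=
    S.exists_max_image (fun g => ∑ j, g j) ⟨0, mem_S.mpr ⟨fun _ => Nat.zero_le _, hzero⟩⟩
  obtain ⟨hgt, hg⟩ := mem_S.mp hgS
  refine ⟨g, hg, hgt, fun j hj => by_contra fun hsat => ?_⟩
  have hraise :=
    hmax _ (mem_S.mpr ⟨update_le_iff.mpr ⟨hj, fun i _ => hgt i⟩, hg.update_add_one hsat⟩)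
  exact hraise.not_gt (Fintype.sum_strictMono (lt_update_self_iff.mpr (Nat.lt_succ_self _)))

abbrev SlackedFlow (Y : Fin k → ℕ) := Σ g : {g // IsFlow Y g}, saturated Y g.1 → ℕ

def encode (σ : SlackedFlow Y) (j : Fin k) : ℕ :=
  σ.1.1 j + if h : j ∈ saturated Y σ.1.1 then σ.2 ⟨j, h⟩ else 0

lemma isSaturatedBelow_encode (σ : SlackedFlow Y) : IsSaturatedBelow Y σ.1.1 (encode σ) :=
  ⟨fun j => Nat.le_add_right _ _, fun j hj => by_contra fun h => by simp [encode, h] at hj⟩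

lemma sum_encode (σ : SlackedFlow Y) : ∑ j, encode σ j = ∑ j, σ.1.1 j + ∑ i, σ.2 i := by
  simp only [encode]
  rw [sum_add_distrib, ← sum_subset (subset_univ _) fun j _ hj => dif_neg hj,
    sum_dite_of_true fun _ h => h]

lemma encode_bijective (hY : ∀ i, 0 < Y i) (hkn : k < ∑ i, Y i) :
    Function.Bijective (encode (Y := Y)) := by
  refine ⟨?_, fun t => ?_⟩
  · rintro ⟨⟨g, hg⟩, w⟩ ⟨⟨g', hg'⟩, w'⟩ h
    have hsat := isSaturatedBelow_encode ⟨⟨g, hg⟩, w⟩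
    have hsat' := isSaturatedBelow_encode ⟨⟨g', hg'⟩, w'⟩
    rw [h] at hsat
    obtain rfl : g = g' := le_antisymm (hg.le_of_isSaturatedBelow hkn hsat.1 hsat')
      (hg'.le_of_isSaturatedBelow hkn hsat'.1 hsat)
    obtain rfl : w = w' := funext fun ⟨j, hj⟩ => by simpa [encode, hj] using congrFun h j
    rfl
  · obtain ⟨g, hg, hgt, hsat⟩ := exists_isSaturatedBelow hY t
    refine ⟨⟨⟨g, hg⟩, fun j => t j - g j⟩, funext fun j => ?_⟩
    by_cases hj : j ∈ saturated Y g
    · simp [encode, hj, Nat.add_sub_cancel' (hgt j)]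
    · simpa [encode, hj] using le_antisymm (hgt j) (not_lt.mp (mt (hsat j) hj))

end Flows

section GeneratingFunction

lemma tsum_pow_sum_fin (Q : ℝ≥0∞) (m : ℕ) :
    ∑' t : Fin m → ℕ, Q ^ ∑ j, t j = (1 - Q)⁻¹ ^ m := by
  induction m with
  | zero => simp
  | succ m ih =>
    rw [← (Fin.consEquiv fun _ => ℕ).tsum_eq, ENNReal.tsum_prod']
    simp only [Fin.consEquiv_apply, Fin.sum_univ_succ, Fin.cons_zero, Fin.cons_succ, pow_add,
      ENNReal.tsum_mul_left, ENNReal.tsum_mul_right, ih, ENNReal.tsum_geometric, pow_succ']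

lemma tsum_pow_sum (Q : ℝ≥0∞) (ι : Type*) [Fintype ι] :
    ∑' t : ι → ℕ, Q ^ ∑ j, t j = (1 - Q)⁻¹ ^ Fintype.card ι := by
  rw [← tsum_pow_sum_fin, ← ((Fintype.equivFin ι).arrowCongr (.refl ℕ)).tsum_eq]
  congr! with t
  exact Fintype.sum_equiv (Fintype.equivFin ι) _ _ fun j => by simp

variable {k : ℕ} [NeZero k] {Y : Fin k → ℕ}

lemma sum_configs_mul_inv (hY : ∀ i, 0 < Y i) (hkn : k < ∑ i, Y i) (Q : ℝ≥0∞) :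
    (∑ X ∈ configs k (∑ i, Y i), Q ^ pathLength X Y * (1 - Q)⁻¹ ^ (ones X).card)
      * (1 - Q ^ k)⁻¹ = (1 - Q)⁻¹ ^ k := calc
  _ = ∑' p : configs k (∑ i, Y i) × ℕ,
        Q ^ (pathLength p.1 Y + k * p.2) * (1 - Q)⁻¹ ^ (ones p.1.1).card := by
    rw [ENNReal.tsum_prod', tsum_fintype, sum_mul, ← sum_coe_sort]
    refine sum_congr rfl fun X _ => ?_
    simp only [pow_add, pow_mul, ← ENNReal.tsum_geometric, ← ENNReal.tsum_mul_left]
    exact tsum_congr fun m => by ring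
  _ = ∑' g : {g // IsFlow Y g}, Q ^ (∑ j, g.1 j) * (1 - Q)⁻¹ ^ (saturated Y g.1).card := by
    rw [← (flowEquiv Y).tsum_eq]
    exact tsum_congr fun g => by
      simp [flowEquiv, g.2.pathLength_flowConfig_add, g.2.saturated_eq]
  _ = ∑' σ : SlackedFlow Y, Q ^ ∑ j, encode σ j := by
    rw [ENNReal.tsum_sigma']
    refine tsum_congr fun g => ?_
    simp only [sum_encode, pow_add, ENNReal.tsum_mul_left]
    rw [← Fintype.card_coe, ← tsum_pow_sum]
  _ = (1 - Q)⁻¹ ^ k := by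
    rw [← tsum_pow_sum_fin]
    exact (Equiv.ofBijective _ (encode_bijective hY hkn)).tsum_eq fun t => Q ^ ∑ j, t j

lemma sum_configs_pow_mul_inv_pow (hY : ∀ i, 0 < Y i) (hkn : k < ∑ i, Y i) {q : ℝ}
    (hq0 : 0 ≤ q) (hq1 : q < 1) :
    ∑ X ∈ configs k (∑ i, Y i), q ^ pathLength X Y * (1 - q)⁻¹ ^ (ones X).card
      = (1 - q ^ k) * (1 - q)⁻¹ ^ k := by
  have hs : 0 < 1 - q := sub_pos.mpr hq1
  have hqk : 0 < 1 - q ^ k := sub_pos.mpr (pow_lt_one₀ hq0 hq1 (NeZero.ne k))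
  have h := sum_configs_mul_inv hY hkn (ENNReal.ofReal q)
  rw [← ENNReal.ofReal_pow hq0, ← ENNReal.ofReal_one, ← ENNReal.ofReal_sub _ hq0,
    ← ENNReal.ofReal_sub _ (pow_nonneg hq0 k), ← ENNReal.ofReal_inv_of_pos hs,
    ← ENNReal.ofReal_inv_of_pos hqk, ← ENNReal.ofReal_pow (inv_nonneg.mpr hs.le)] at h
  simp only [← ENNReal.ofReal_pow hq0, ← ENNReal.ofReal_pow (inv_nonneg.mpr hs.le),
    ← ENNReal.ofReal_mul (pow_nonneg hq0 _)] at h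
  rw [← ENNReal.ofReal_sum_of_nonneg fun X _ => by positivity,
    ← ENNReal.ofReal_mul (sum_nonneg fun X _ => by positivity),
    ENNReal.ofReal_eq_ofReal_iff (by positivity) (by positivity)] at h
  field_simp at h ⊢
  linarith

end GeneratingFunction

section States

variable {k n : ℕ}

def statesFinset (k n : ℕ) : Finset ((Fin k → ℕ) × Finset (Fin k)) :=
  (configs k n ×ˢ univ).filter fun p => p.2 ≠ univ ∧ ∀ i ∈ p.2, p.1 i = 1

lemma coe_statesFinset :
    (statesFinset k n : Set ((Fin k → ℕ) × Finset (Fin k))) = States k n := by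
  ext ⟨X, B⟩
  simp [statesFinset, States, mem_configs, and_assoc]

lemma sum_statesFinset {M : Type*} [AddCommMonoid M] (f : (Fin k → ℕ) × Finset (Fin k) → M) :
    ∑ i ∈ statesFinset k n, f i
      = ∑ X ∈ configs k n, ∑ B ∈ (ones X).powerset.erase univ, f (X, B) := by
  rw [statesFinset, sum_filter, sum_product]
  refine sum_congr rfl fun X _ => ?_
  rw [← sum_filter]
  congr 1
  ext B
  simp [ones, subset_iff]

lemma sum_pow_card_powerset (r : ℝ) (E : Finset (Fin k)) :
    ∑ B ∈ E.powerset, r ^ B.card = (r + 1) ^ E.card := by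
  simpa using Finset.sum_pow_mul_eq_add_pow r 1 E

lemma sum_statesFinset_pow_mul_zpow_phi [NeZero k] {Y : Fin k → ℕ} (hY : Y ∈ configs k n)
    {s : ℝ} (hs0 : 0 < s) (hs1 : s < 1) :
    ∑ i ∈ statesFinset k n, ((1 - s) / s) ^ i.2.card * (1 - s) ^ phi (fun m => (Y m : ℤ) - i.1 m)
      = (1 - (1 - s) ^ k) / s ^ k := by
  have hs : s ≠ 0 := hs0.ne'
  have hr : (1 - s) / s + 1 = s⁻¹ := by field_simp; ring
  rw [sum_statesFinset]
  simp only [← sum_mul (s := (ones _).powerset.erase univ)]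
  rcases (le_of_mem_configs hY).eq_or_lt with rfl | hkn
  · rw [configs_self, mem_singleton] at hY
    subst hY
    have hones : ones (fun _ : Fin k => 1) = univ := by simp [ones]
    have hgamma : gamma (fun _ : Fin k => (0 : ℤ)) = 0 := funext fun j => sum_const_zero
    rw [configs_self, sum_singleton, hones, sum_erase_eq_sub (mem_powerset_self _),
      sum_pow_card_powerset, hr]
    simp [phi, hgamma, div_pow]
    field_simp
  · obtain ⟨hYpos, rfl⟩ := mem_configs.mp hY
    have := sum_configs_pow_mul_inv_pow hYpos hkn (sub_nonneg.mpr hs1.le) (by linarith)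
    rw [sub_sub_cancel] at this
    rw [div_eq_mul_inv (1 - (1 - s) ^ k), ← inv_pow, ← this]
    refine sum_congr rfl fun X hX => ?_
    have hones : univ ∉ (ones X).powerset := fun h => hkn.ne <| by
      have : X = fun _ => 1 := funext fun i => by simpa [ones] using mem_powerset.mp h (mem_univ i)
      simp [← (mem_configs.mp hX).2, this]
    rw [erase_eq_of_notMem hones, sum_pow_card_powerset, hr, ← natCast_pathLength, zpow_natCast,
      mul_comm]

end States

end Warehouse

open Warehouse

theorem warehouse_stationary_distribution_general (k n : ℕ)
    (s q r : ℝ) (hs0 : 0 < s) (hs1 : s < 1) (hq : q = 1 - s) (hr : r = q / s)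
    (p : ((Fin k → ℕ) × Finset (Fin k)) → ((Fin k → ℕ) × Finset (Fin k)) → ℝ)
    (hp : ∀ i j, p i j
      = r ^ j.2.card * (s ^ k / (1 - q ^ k))
          * q ^ phi (fun m => (j.1 m : ℤ) - (i.1 m : ℤ)))
    (ω : ((Fin k → ℕ) × Finset (Fin k)) → ℝ) (hω : ∀ i, ω i = r ^ i.2.card) :
    (∀ j ∈ States k n, ∑ᶠ i ∈ States k n, ω i * p i j = ω j) ∧
    (∀ j ∈ States k n,
      ∑ᶠ i ∈ States k n, (ω i / ∑ᶠ i' ∈ States k n, ω i') * p i j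
        = ω j / ∑ᶠ i' ∈ States k n, ω i') := by
  subst hq hr
  have balance : ∀ j ∈ States k n, ∑ i ∈ statesFinset k n, ω i * p i j = ω j := by
    rintro ⟨Y, C⟩ ⟨hYpos, hYsum, hC, -⟩
    have : NeZero k := ⟨by rintro rfl; exact hC (Subsingleton.elim _ _)⟩
    have hqk : 1 - (1 - s) ^ k ≠ 0 :=
      (sub_pos.mpr (pow_lt_one₀ (by linarith) (by linarith) (NeZero.ne k))).ne'
    simp only [hω, hp]
    calc ∑ i ∈ statesFinset k n, ((1 - s) / s) ^ i.2.card * (((1 - s) / s) ^ C.card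
            * (s ^ k / (1 - (1 - s) ^ k)) * (1 - s) ^ phi (fun m => (Y m : ℤ) - i.1 m))
        = ((1 - s) / s) ^ C.card * (s ^ k / (1 - (1 - s) ^ k)) * ∑ i ∈ statesFinset k n,
            ((1 - s) / s) ^ i.2.card * (1 - s) ^ phi (fun m => (Y m : ℤ) - i.1 m) := by
          rw [mul_sum]
          exact sum_congr rfl fun i _ => by ring
      _ = ((1 - s) / s) ^ C.card := by
          rw [sum_statesFinset_pow_mul_zpow_phi (mem_configs.mpr ⟨hYpos, hYsum⟩) hs0 hs1]
          field_simp
  simp only [← coe_statesFinset, finsum_mem_coe_finset] at balance ⊢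
  refine ⟨balance, fun j hj => ?_⟩
  rw [← balance j hj, sum_div]
  exact sum_congr rfl fun i _ => by ring

/-- with transition probabilities
`p_{ij} = r^{|C|} · (s^k / (1 - q^k)) · q^{φ(Y - X)}` from state `i = (X,B)` to
state `j = (Y,C)`, the weights `ω_i = r^{|B|}` satisfy the balance
`Σ_i ω_i p_{ij} = ω_j` for every state `j`; consequently the normalized
distribution `ν = ω / Σ ω` is stationary. -/
theorem warehouse_stationary_distribution (k n : ℕ) (hk : 2 ≤ k) (hn : k ≤ n)
    (s q r : ℝ) (hs0 : 0 < s) (hs1 : s < 1) (hq : q = 1 - s) (hr : r = q / s)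
    (p : ((Fin k → ℕ) × Finset (Fin k)) → ((Fin k → ℕ) × Finset (Fin k)) → ℝ)
    (hp : ∀ i j, p i j
      = r ^ j.2.card * (s ^ k / (1 - q ^ k))
          * q ^ phi (fun m => (j.1 m : ℤ) - (i.1 m : ℤ)))
    (ω : ((Fin k → ℕ) × Finset (Fin k)) → ℝ) (hω : ∀ i, ω i = r ^ i.2.card) :
    (∀ j ∈ States k n, ∑ᶠ i ∈ States k n, ω i * p i j = ω j) ∧
    (∀ j ∈ States k n,
      ∑ᶠ i ∈ States k n, (ω i / ∑ᶠ i' ∈ States k n, ω i') * p i j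
        = ω j / ∑ᶠ i' ∈ States k n, ω i') :=
  warehouse_stationary_distribution_general k n s q r hs0 hs1 hq hr p hp ω hω
end

section
/- Let k and n be integers with 2 ≤ k ≤ n and let r > 0 be a real number. Then the stationary probability that worker 1 is blocked satisfies B(k, n, r) = (Σ_{(X,B) : 1 ∈ B} r^{|B|}) / (Σ_{(X,B)} r^{|B|}) = (Σ_{b=0}^{k−2} C(k−1, b) · C(n−b−2, k−b−2) · r^{b+1}) / (Σ_{b=0}^{k−1} C(k, b) · C(n−b−1, k−b−1) · r^b), where the numerator's sum ranges over all states (X, B) with 1 ∈ B, the denominator's sum ranges over all states, and C(·,·) denotes the binomial coefficient. -/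
open Finset

section Compositions

variable {ι : Type*} [Fintype ι]

theorem Nat.card_sum_eq_choose (N : ℕ) :
    Nat.card {P : ι → ℕ // ∑ i, P i = N} = (Fintype.card ι + N - 1).choose N := by
  classical
  rw [← Nat.card_congr (Sym.equivNatSumOfFintype ι N), Nat.card_eq_fintype_card,
    Sym.card_sym_eq_choose]

def succSumEquiv (M : ℕ) :
    {P : ι → ℕ // ∑ i, P i = M} ≃
      {X : ι → ℕ // (∀ i, 0 < X i) ∧ ∑ i, X i = M + Fintype.card ι} where
  toFun P := ⟨fun i => P.1 i + 1, fun _ => Nat.succ_pos _, by simp [sum_add_distrib, P.2]⟩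
  invFun X := ⟨fun i => X.1 i - 1, by
    have h := X.2.2
    rw [← sum_congr rfl fun i _ => Nat.sub_add_cancel (X.2.1 i), sum_add_distrib] at h
    simpa using h⟩
  left_inv P := by ext; simp
  right_inv X := by ext i; simp [Nat.sub_add_cancel (X.2.1 i)]

theorem Nat.card_pos_sum_eq_choose {N : ℕ} (h : Fintype.card ι ≤ N) :
    Nat.card {X : ι → ℕ // (∀ i, 0 < X i) ∧ ∑ i, X i = N} =
      (N - 1).choose (N - Fintype.card ι) := by
  obtain ⟨M, rfl⟩ := Nat.exists_eq_add_of_le' h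
  rw [← Nat.card_congr (succSumEquiv M), Nat.card_sum_eq_choose]
  congr 1 <;> omega

variable [DecidableEq ι]

def eqOneOnEquivCompl {B : Finset ι} {N : ℕ} (hB : #B ≤ N) :
    {X : ι → ℕ // (∀ i, 0 < X i) ∧ (∀ i ∈ B, X i = 1) ∧ ∑ i, X i = N} ≃
      {Y : {i // i ∉ B} → ℕ // (∀ i, 0 < Y i) ∧ ∑ i, Y i = N - #B} where
  toFun X := ⟨fun i => X.1 i, fun i => X.2.1 i, by
    have h := X.2.2.2
    rw [← Fintype.sum_subtype_add_sum_subtype (· ∈ B), sum_congr rfl fun i _ => X.2.2.1 i.1 i.2]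
      at h
    simp only [sum_const, card_univ, Fintype.card_coe, smul_eq_mul, mul_one] at h
    dsimp only
    omega⟩
  invFun Y := ⟨fun i => if h : i ∈ B then 1 else Y.1 ⟨i, h⟩, fun i => by
    dsimp only
    split
    · exact Nat.one_pos
    · exact Y.2.1 _, fun i hi => dif_pos hi, by
    show ∑ i, (if h : i ∈ B then 1 else Y.1 ⟨i, h⟩) = N
    rw [← Fintype.sum_subtype_add_sum_subtype (· ∈ B), sum_congr rfl fun i _ => dif_pos i.2,
      sum_congr rfl fun (i : {i // i ∉ B}) _ => dif_neg i.2, Y.2.2]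
    simp only [sum_const, card_univ, Fintype.card_coe, smul_eq_mul, mul_one]
    omega⟩
  left_inv X := by
    ext i
    by_cases h : i ∈ B <;> simp [h, X.2.2.1 i]
  right_inv Y := by ext i; simp [i.2]

theorem Nat.card_pos_sum_eq_choose_of_eq_one_on {B : Finset ι} {N : ℕ}
    (h : Fintype.card ι ≤ N) :
    Nat.card {X : ι → ℕ // (∀ i, 0 < X i) ∧ (∀ i ∈ B, X i = 1) ∧ ∑ i, X i = N} =
      (N - #B - 1).choose (N - Fintype.card ι) := by
  have hB : #B ≤ Fintype.card ι := card_le_univ B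
  have hcompl : Fintype.card {i // i ∉ B} = Fintype.card ι - #B := by
    simp [Fintype.card_subtype_compl]
  rw [Nat.card_congr (eqOneOnEquivCompl (hB.trans h)), Nat.card_pos_sum_eq_choose (by omega),
    hcompl]
  congr 1
  omega

end Compositions

namespace Finset

variable {α M : Type*} [DecidableEq α] [AddCommMonoid M]

theorem sum_ssubsets_apply_card (s : Finset α) (f : ℕ → M) :
    ∑ t ∈ s.ssubsets, f #t = ∑ m ∈ range #s, (#s).choose m • f m := by
  rw [← sum_fiberwise_of_maps_to (g := card) (t := range #s)
    fun t ht => mem_range.2 (card_lt_card (mem_ssubsets.1 ht))]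
  refine sum_congr rfl fun m hm => ?_
  have hfiber : {t ∈ s.ssubsets | #t = m} = powersetCard m s := by
    ext t
    simp only [mem_filter, mem_ssubsets, mem_powersetCard]
    refine ⟨fun ⟨h, hcard⟩ => ⟨h.subset, hcard⟩, fun ⟨h, hcard⟩ => ⟨h.ssubset_of_ne ?_, hcard⟩⟩
    rintro rfl
    simp [hcard] at hm
  rw [hfiber, sum_congr rfl fun t ht => congrArg f (mem_powersetCard.1 ht).2, sum_const,
    card_powersetCard]

theorem notMem_of_ssubset_erase {s u : Finset α} {a : α} (hu : u ⊂ s.erase a) : a ∉ u :=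
  fun h => notMem_erase a s (hu.subset h)

theorem sum_ssubsets_filter_mem_apply_card {s : Finset α} {a : α} (ha : a ∈ s) (f : ℕ → M) :
    ∑ t ∈ s.ssubsets with a ∈ t, f #t =
      ∑ m ∈ range (#s - 1), (#s - 1).choose m • f (m + 1) := by
  calc ∑ t ∈ s.ssubsets with a ∈ t, f #t = ∑ t ∈ (s.erase a).ssubsets, f (#t + 1) := by
        refine sum_nbij' (erase · a) (insert a) ?_ ?_ ?_ ?_ ?_
        · simp only [mem_filter, mem_ssubsets]
          rintro t ⟨ht, hat⟩
          refine (erase_subset_erase a ht.subset).ssubset_of_ne fun h => ht.ne ?_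
          rw [← insert_erase hat, h, insert_erase ha]
        · simp only [mem_filter, mem_ssubsets, mem_insert_self, and_true]
          intro u hu
          refine (insert_subset ha (hu.subset.trans (erase_subset a s))).ssubset_of_ne
            fun h => hu.ne ?_
          rw [← h, erase_insert (notMem_of_ssubset_erase hu)]
        · simp only [mem_filter]
          exact fun t ht => insert_erase ht.2
        · simp only [mem_ssubsets]
          exact fun u hu => erase_insert (notMem_of_ssubset_erase hu)
        · simp only [mem_filter]
          exact fun t ht => by rw [card_erase_add_one ht.2]
    _ = _ := by
        rw [← card_erase_of_mem ha]
        exact (s.erase a).sum_ssubsets_apply_card fun m => f (m + 1)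

theorem sum_filter_product_apply_snd {β γ : Type*} (s : Finset β) (t : Finset γ)
    (p : β × γ → Prop) [DecidablePred p] (g : γ → M) :
    ∑ x ∈ s ×ˢ t with p x, g x.2 = ∑ c ∈ t, #{b ∈ s | p (b, c)} • g c := by
  rw [sum_filter, sum_product_right]
  refine sum_congr rfl fun c _ => ?_
  rw [← sum_filter]
  exact sum_const (g c)

end Finset

namespace Warehouse

variable {k n : ℕ}

def statesOver (k n : ℕ) (𝒜 : Finset (Finset (Fin k))) :
    Finset ((Fin k → ℕ) × Finset (Fin k)) :=
  {p ∈ Nat.antidiagonalTuple k n ×ˢ 𝒜 | (∀ i, 0 < p.1 i) ∧ ∀ i ∈ p.2, p.1 i = 1}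

theorem coe_statesOver_filter_ssubsets (P : Finset (Fin k) → Prop) [DecidablePred P] :
    (statesOver k n {B ∈ univ.ssubsets | P B} : Set _) = {p ∈ States k n | P p.2} := by
  ext p
  simp only [statesOver, States, coe_filter, mem_product, Nat.mem_antidiagonalTuple, mem_filter,
    mem_ssubsets, ssubset_univ_iff, Set.mem_ofPred_eq]
  tauto

theorem card_antidiagonalTuple_filter_pos_eq_one_on (hkn : k ≤ n) {B : Finset (Fin k)}
    (hB : B ≠ univ) :
    #{X ∈ Nat.antidiagonalTuple k n | (∀ i, 0 < X i) ∧ ∀ i ∈ B, X i = 1} =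
      (n - #B - 1).choose (k - #B - 1) := by
  have hBk : #B < k := by simpa using card_lt_card (ssubset_univ_iff.2 hB)
  have hmem (X : Fin k → ℕ) :
      X ∈ {X ∈ Nat.antidiagonalTuple k n | (∀ i, 0 < X i) ∧ ∀ i ∈ B, X i = 1} ↔
        (∀ i, 0 < X i) ∧ (∀ i ∈ B, X i = 1) ∧ ∑ i, X i = n := by
    rw [mem_filter, Nat.mem_antidiagonalTuple]
    tauto
  rw [← Nat.card_eq_finsetCard, Nat.card_congr (Equiv.subtypeEquivRight hmem),
    Nat.card_pos_sum_eq_choose_of_eq_one_on (by simpa using hkn), Fintype.card_fin]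
  exact Nat.choose_symm_of_eq_add (by omega)

theorem sum_pow_card_statesOver {R : Type*} [CommSemiring R] (hkn : k ≤ n) (r : R)
    {𝒜 : Finset (Finset (Fin k))} (h𝒜 : ∀ B ∈ 𝒜, B ≠ univ) :
    ∑ p ∈ statesOver k n 𝒜, r ^ #p.2 = ∑ B ∈ 𝒜, (n - #B - 1).choose (k - #B - 1) • r ^ #B := by
  refine (sum_filter_product_apply_snd _ _ _ fun B => r ^ #B).trans
    (sum_congr rfl fun B hB => ?_)
  rw [card_antidiagonalTuple_filter_pos_eq_one_on hkn (h𝒜 B hB)]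

theorem finsum_states_pow_card {R : Type*} [CommSemiring R] (hkn : k ≤ n) (r : R)
    (P : Finset (Fin k) → Prop) [DecidablePred P] :
    ∑ᶠ p ∈ {p ∈ States k n | P p.2}, r ^ #p.2 =
      ∑ B ∈ univ.ssubsets with P B, (n - #B - 1).choose (k - #B - 1) • r ^ #B := by
  rw [← coe_statesOver_filter_ssubsets, finsum_mem_coe_finset, sum_pow_card_statesOver hkn r
    fun B hB => ssubset_univ_iff.1 (mem_ssubsets.1 (mem_filter.1 hB).1)]

end Warehouse

/-- the stationary probability that worker 1 is blocked, i.e. the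
ratio of the total weight `r^{|B|}` of states with `1 ∈ B` to the total weight
of all states, equals
`(Σ_{b=0}^{k-2} C(k-1,b) C(n-b-2,k-b-2) r^{b+1}) / (Σ_{b=0}^{k-1} C(k,b) C(n-b-1,k-b-1) r^b)`. -/
theorem warehouse_blockage_fraction (k n : ℕ) (hk : 2 ≤ k) (hkn : k ≤ n)
    (r : ℝ) :
    (∑ᶠ p ∈ {p ∈ States k n | (⟨0, by omega⟩ : Fin k) ∈ p.2}, r ^ p.2.card)
        / (∑ᶠ p ∈ States k n, r ^ p.2.card)
      = (∑ b ∈ Finset.range (k - 1),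
            (Nat.choose (k - 1) b : ℝ) * (Nat.choose (n - b - 2) (k - b - 2) : ℝ)
              * r ^ (b + 1))
          / (∑ b ∈ Finset.range k,
              (Nat.choose k b : ℝ) * (Nat.choose (n - b - 1) (k - b - 1) : ℝ) * r ^ b) := by
  have hden := Warehouse.finsum_states_pow_card hkn r fun _ => True
  rw [Set.sep_true, filter_true] at hden
  rw [Warehouse.finsum_states_pow_card hkn r fun B => (⟨0, by omega⟩ : Fin k) ∈ B, hden,
    sum_ssubsets_filter_mem_apply_card (mem_univ _) fun b => (n - b - 1).choose (k - b - 1) • r ^ b,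
    sum_ssubsets_apply_card univ fun b => (n - b - 1).choose (k - b - 1) • r ^ b]
  simp only [card_univ, Fintype.card_fin, nsmul_eq_mul, Nat.sub_sub, add_assoc, mul_assoc]
end
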